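/- There exists δ > 0 such that for every sequence (P_m)_{m≥1} with P_m = P⁰ for m odd and P_m ∈ {P⁰, P¹} for m even, and for every m ≥ 0: the closed real interval [−1,1] (viewed inside ℂ) is contained in 𝒦_m, and the discs D(0,δ) and D(−1,δ) are contained in the interior of 𝒦_m. -/

import Mathlib

/-!
Every `P_m` is `P⁰` or `P¹`, and both map `[-1, 1]` into itself.
For the discs, orbits stay near the superattracting 2-cycle `{0, -1}` of `P⁰`, which swaps small
discs about `0` and `-1`, contracting quadratically. `P¹` fixes `0` but expands about `-1` by a
factor `≈ 3`; it acts only at even times, right after a step of `P⁰`, which lands within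
`1/100` of `-1`. So the radius about `-1` is taken `1/25` at even times and `1/100` at odd times.
-/

open Filter

/-- `P⁰(z) = z² − 1`. -/
def P0 : ℂ → ℂ := fun z => z ^ 2 - 1

/-- `P¹(z) = z³`. -/
def P1 : ℂ → ℂ := fun z => z ^ 3

/-- `Qcomp P m n z` is the value at `z` of the composition
`Q_{m,n} = P_n ∘ ⋯ ∘ P_{m+1}` (with `Q_{m,m} = id`). -/
def Qcomp (P : ℕ → ℂ → ℂ) (m n : ℕ) (z : ℂ) : ℂ :=
  (List.range (n - m)).foldl (fun w k => P (m + k + 1) w) z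

/-- Sequences with `P_m = P⁰` for odd `m` and `P_m ∈ {P⁰, P¹}` for even `m`. -/
def IsAdmissibleSeq (P : ℕ → ℂ → ℂ) : Prop :=
  ∀ m, 1 ≤ m → (Odd m → P m = P0) ∧ (Even m → P m = P0 ∨ P m = P1)

/-- The `m`-th iterated filled Julia set. -/
def filledJulia (P : ℕ → ℂ → ℂ) (m : ℕ) : Set ℂ :=
  {z | ∃ C : ℝ, ∀ n, m ≤ n → ‖Qcomp P m n z‖ ≤ C}

open Set Metric

section Qcomp

variable (P : ℕ → ℂ → ℂ)

@[simp]
lemma Qcomp_self (m : ℕ) (z : ℂ) : Qcomp P m m z = z := by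
  simp [Qcomp]

lemma Qcomp_succ {m n : ℕ} (h : m ≤ n) (z : ℂ) :
    Qcomp P m (n + 1) z = P (n + 1) (Qcomp P m n z) := by
  have hlen : n + 1 - m = n - m + 1 := by omega
  have hidx : m + (n - m) + 1 = n + 1 := by omega
  simp [Qcomp, hlen, List.range_succ, hidx]

lemma Qcomp_mem_of_mapsTo {S : ℕ → Set ℂ} (hS : ∀ n, MapsTo (P (n + 1)) (S n) (S (n + 1)))
    {m : ℕ} {z : ℂ} (hz : z ∈ S m) {n : ℕ} (hmn : m ≤ n) : Qcomp P m n z ∈ S n := by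
  induction n, hmn using Nat.le_induction with
  | base => simpa using hz
  | succ n hmn ih => rw [Qcomp_succ P hmn]; exact hS n ih

lemma mem_filledJulia_of_mapsTo {S : ℕ → Set ℂ} {C : ℝ}
    (hS : ∀ n, MapsTo (P (n + 1)) (S n) (S (n + 1))) (hC : ∀ n, S n ⊆ closedBall 0 C)
    {m : ℕ} {z : ℂ} (hz : z ∈ S m) : z ∈ filledJulia P m :=
  ⟨C, fun _ hmn => mem_closedBall_zero_iff.1 (hC _ (Qcomp_mem_of_mapsTo P hS hz hmn))⟩

end Qcomp

lemma IsAdmissibleSeq.eq_P0_or_P1 {P : ℕ → ℂ → ℂ} (hP : IsAdmissibleSeq P) (n : ℕ) :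
    P (n + 1) = P0 ∨ P (n + 1) = P1 := by
  obtain ⟨hodd, heven⟩ := hP (n + 1) (by omega)
  rcases Nat.even_or_odd (n + 1) with h | h
  · exact heven h
  · exact Or.inl (hodd h)

abbrev realUnitInterval : Set ℂ := (fun x : ℝ => (x : ℂ)) '' Icc (-1 : ℝ) 1

lemma realUnitInterval_subset_closedBall : realUnitInterval ⊆ closedBall 0 1 := by
  rintro _ ⟨x, hx, rfl⟩
  rw [mem_closedBall_zero_iff, Complex.norm_real, Real.norm_eq_abs]
  exact abs_le.2 hx

lemma mapsTo_P0_realUnitInterval : MapsTo P0 realUnitInterval realUnitInterval := by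
  rintro _ ⟨x, ⟨hx₁, hx₂⟩, rfl⟩
  exact ⟨x ^ 2 - 1, ⟨by nlinarith, by nlinarith⟩, by simp [P0]⟩

lemma mapsTo_P1_realUnitInterval : MapsTo P1 realUnitInterval realUnitInterval := by
  rintro _ ⟨x, hx, rfl⟩
  have hcube : |x ^ 3| ≤ 1 := by
    rw [abs_pow]
    exact pow_le_one₀ (abs_nonneg x) (abs_le.2 hx)
  exact ⟨x ^ 3, abs_le.1 hcube, by simp [P1]⟩

lemma mapsTo_realUnitInterval {P : ℕ → ℂ → ℂ} (hP : IsAdmissibleSeq P) (n : ℕ) :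
    MapsTo (P (n + 1)) realUnitInterval realUnitInterval := by
  rcases hP.eq_P0_or_P1 n with h | h <;> rw [h]
  exacts [mapsTo_P0_realUnitInterval, mapsTo_P1_realUnitInterval]

lemma norm_P0_add_one (w : ℂ) : ‖P0 w + 1‖ = ‖w‖ ^ 2 := by
  simp [P0]

lemma norm_P0_le (w : ℂ) : ‖P0 w‖ ≤ ‖w + 1‖ * (‖w + 1‖ + 2) := by
  have hfac : P0 w = (w + 1) * ((w + 1) - 2) := by simp only [P0]; ring
  rw [hfac, norm_mul]
  gcongr
  simpa using norm_sub_le (w + 1) 2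

lemma norm_P1 (w : ℂ) : ‖P1 w‖ = ‖w‖ ^ 3 := by
  simp [P1]

lemma norm_P1_add_one_le (w : ℂ) :
    ‖P1 w + 1‖ ≤ ‖w + 1‖ * (‖w + 1‖ ^ 2 + 3 * ‖w + 1‖ + 3) := by
  set u := w + 1
  have hfac : P1 w + 1 = u * (u ^ 2 - 3 * u + 3) := by simp only [P1, u]; ring
  rw [hfac, norm_mul]
  gcongr
  calc ‖u ^ 2 - 3 * u + 3‖ ≤ ‖u ^ 2‖ + ‖3 * u‖ + ‖(3 : ℂ)‖ :=
        (norm_add_le _ _).trans (by gcongr; exact norm_sub_le _ _)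
    _ = ‖u‖ ^ 2 + 3 * ‖u‖ + 3 := by simp

def nearCycle (r : ℝ) : Set ℂ := {w | ‖w‖ ≤ 1 / 10 ∨ ‖w + 1‖ ≤ r}

lemma nearCycle_subset_closedBall {r : ℝ} (hr : r ≤ 1) : nearCycle r ⊆ closedBall 0 2 := by
  intro w hw
  rw [mem_closedBall_zero_iff]
  have htri : ‖w‖ ≤ ‖w + 1‖ + 1 := by simpa using norm_sub_le (w + 1) 1
  rcases hw with hw | hw <;> linarith

lemma mapsTo_P0_nearCycle {r r' : ℝ} (hr₀ : 0 ≤ r) (hr : r ≤ 1 / 25) (hr' : 1 / 100 ≤ r') :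
    MapsTo P0 (nearCycle r) (nearCycle r') := by
  rintro w (hw | hw)
  · right
    rw [norm_P0_add_one]
    nlinarith [norm_nonneg w]
  · left
    have hbound : ‖w + 1‖ * (‖w + 1‖ + 2) ≤ 1 / 10 := by nlinarith [norm_nonneg (w + 1)]
    exact (norm_P0_le w).trans hbound

lemma mapsTo_P1_nearCycle : MapsTo P1 (nearCycle (1 / 100)) (nearCycle (1 / 25)) := by
  rintro w (hw | hw)
  · left
    rw [norm_P1]
    nlinarith [norm_nonneg w, pow_le_pow_left₀ (norm_nonneg w) hw 3]
  · right
    have hnn := norm_nonneg (w + 1)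
    have hbound : ‖w + 1‖ * (‖w + 1‖ ^ 2 + 3 * ‖w + 1‖ + 3) ≤ 1 / 25 := by nlinarith
    exact (norm_P1_add_one_le w).trans hbound

noncomputable def cycleRadius (n : ℕ) : ℝ := if Even n then 1 / 25 else 1 / 100

lemma one_div_hundred_le_cycleRadius (n : ℕ) : 1 / 100 ≤ cycleRadius n := by
  unfold cycleRadius; split_ifs <;> norm_num

lemma mapsTo_nearCycle_cycleRadius {P : ℕ → ℂ → ℂ} (hP : IsAdmissibleSeq P) (n : ℕ) :
    MapsTo (P (n + 1)) (nearCycle (cycleRadius n)) (nearCycle (cycleRadius (n + 1))) := by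
  rcases Nat.even_or_odd n with hn | hn
  · have hodd : Odd (n + 1) := hn.add_one
    rw [(hP (n + 1) (by omega)).1 hodd]
    exact mapsTo_P0_nearCycle (by simp [cycleRadius, hn]) (by simp [cycleRadius, hn])
      (one_div_hundred_le_cycleRadius _)
  · have hr : cycleRadius n = 1 / 100 := by simp [cycleRadius, Nat.not_even_iff_odd.2 hn]
    have hr' : cycleRadius (n + 1) = 1 / 25 := by simp [cycleRadius, hn.add_one]
    rw [hr, hr']
    rcases hP.eq_P0_or_P1 n with h | h <;> rw [h]
    · exact mapsTo_P0_nearCycle (by norm_num) (by norm_num) (by norm_num)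
    · exact mapsTo_P1_nearCycle

lemma ball_subset_interior_filledJulia {P : ℕ → ℂ → ℂ} (hP : IsAdmissibleSeq P) (m : ℕ)
    {c : ℂ} (hc : ball c (1 / 100) ⊆ nearCycle (cycleRadius m)) :
    ball c (1 / 100) ⊆ interior (filledJulia P m) :=
  isOpen_ball.subset_interior_iff.2 fun _ hz =>
    mem_filledJulia_of_mapsTo P (mapsTo_nearCycle_cycleRadius hP)
      (fun n => nearCycle_subset_closedBall (by unfold cycleRadius; split_ifs <;> norm_num))
      (hc hz)

/-- There is a uniform `δ > 0` such that for every admissible sequence and every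
`m ≥ 0`, the real interval `[−1,1] ⊂ ℂ` lies in `𝒦_m` and the discs
`D(0,δ)`, `D(−1,δ)` lie in the interior of `𝒦_m`. -/
theorem interval_and_discs_in_filledJulia :
    ∃ δ : ℝ, 0 < δ ∧
      ∀ P : ℕ → ℂ → ℂ, IsAdmissibleSeq P →
        ∀ m : ℕ,
          (fun x : ℝ => (x : ℂ)) '' Set.Icc (-1 : ℝ) 1 ⊆ filledJulia P m ∧
          Metric.ball (0 : ℂ) δ ⊆ interior (filledJulia P m) ∧
          Metric.ball (-1 : ℂ) δ ⊆ interior (filledJulia P m) := by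
  refine ⟨1 / 100, by norm_num, fun P hP m => ⟨?_, ?_, ?_⟩⟩
  · exact fun _ hz => mem_filledJulia_of_mapsTo P (mapsTo_realUnitInterval hP)
      (fun _ => realUnitInterval_subset_closedBall) hz
  · refine ball_subset_interior_filledJulia hP m fun z hz => Or.inl ?_
    rw [mem_ball_zero_iff] at hz
    linarith
  · refine ball_subset_interior_filledJulia hP m fun z hz => Or.inr ?_
    rw [mem_ball, dist_eq_norm, sub_neg_eq_add] at hz
    linarith [one_div_hundred_le_cycleRadius m]
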